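/- arXiv:2304.07510 — 4 statements merged into one kernel-verified Lean document; each statement's English description precedes it below -/
import Mathlib

section
/- If i and j are two distinct nodes of a quiver Q with no arrows between them (B[i][j] = 0), then mutations at i and j commute: μ_i(μ_j(B)) = μ_j(μ_i(B)). -/
/-- Quiver mutation at node `k`, encoded on skew-symmetric integer matrices. -/
def qMut {n : ℕ} (B : Matrix (Fin n) (Fin n) ℤ) (k : Fin n) : Matrix (Fin n) (Fin n) ℤ :=
  fun i j => if i = k ∨ j = k then -B i j
    else B i j + (|B i k| * B k j + B i k * |B k j|) / 2

/-- If two distinct nodes have no arrows between them, the mutations at these nodes commute. -/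
theorem mutation_comm {n : ℕ} (B : Matrix (Fin n) (Fin n) ℤ)
    (hskew : ∀ i j, B j i = -B i j) (i j : Fin n) (hij : i ≠ j) (h0 : B i j = 0) :
    qMut (qMut B j) i = qMut (qMut B i) j := by
  have h0' : B j i = 0 := by rw [hskew]; simp [h0]
  clear hskew
  funext a b
  simp only [qMut]
  by_cases hai : a = i <;> by_cases haj : a = j <;> by_cases hbi : b = i <;>
    by_cases hbj : b = j <;>
    simp only [hai, haj, hbi, hbj, h0, h0', hij, hij.symm, if_true, if_false, or_true,
      true_or, or_self, eq_self_iff_true, if_pos, abs_zero, mul_zero, zero_mul, add_zero,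
      zero_add, neg_neg, neg_zero] <;>
    first
      | rfl
      | (simp_all only [or_self, or_false, false_or, if_false, not_false_iff,
          if_neg, Int.zero_ediv, add_zero]; try ring)
end

section
/- Let τ be an automorphism of a quiver Q (a permutation of nodes with B[τ(i)][τ(j)] = B[i][j] for all i,j), and let O be a τ-orbit of nodes such that B[i][j] = 0 for all i,j in O. Then the quiver obtained by mutating at every node of O (in any order; the mutations commute) again admits τ as an automorphism. -/
def mutCorr (a b : ℤ) : ℤ := (|a| * b + a * |b|) / 2

@[simp]
lemma mutCorr_zero_left (b : ℤ) : mutCorr 0 b = 0 := by simp [mutCorr]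

@[simp]
lemma mutCorr_zero_right (a : ℤ) : mutCorr a 0 = 0 := by simp [mutCorr]

section GroupMutation

variable {ι : Type*}

def NoArrowsOn (B : Matrix ι ι ℤ) (S : Finset ι) : Prop :=
  ∀ i ∈ S, ∀ j ∈ S, B i j = 0

lemma NoArrowsOn.mono {B : Matrix ι ι ℤ} {S T : Finset ι} (hT : NoArrowsOn B T) (hST : S ⊆ T) :
    NoArrowsOn B S :=
  fun i hi j hj => hT i (hST hi) j (hST hj)

variable [DecidableEq ι]

def groupMut (B : Matrix ι ι ℤ) (S : Finset ι) : Matrix ι ι ℤ :=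
  fun i j => if i ∈ S ∨ j ∈ S then -B i j else B i j + ∑ k ∈ S, mutCorr (B i k) (B k j)

@[simp]
lemma groupMut_empty (B : Matrix ι ι ℤ) : groupMut B ∅ = B := by
  ext i j
  simp [groupMut]

lemma groupMut_apply_perm {B : Matrix ι ι ℤ} {S : Finset ι} {τ : Equiv.Perm ι}
    (hτ : ∀ i j, B (τ i) (τ j) = B i j) (hS : S.map τ.toEmbedding = S) (i j : ι) :
    groupMut B S (τ i) (τ j) = groupMut B S i j := by
  have hmem : ∀ x, τ x ∈ S ↔ x ∈ S := fun x => by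
    conv_lhs => rw [← hS]
    simp
  have hsum : ∑ k ∈ S, mutCorr (B (τ i) k) (B k (τ j)) = ∑ k ∈ S, mutCorr (B i k) (B k j) := by
    conv_lhs => rw [← hS, Finset.sum_map]
    simp [hτ]
  simp only [groupMut, hmem, hτ, hsum]

end GroupMutation

section Mutation

variable {n : ℕ} {B : Matrix (Fin n) (Fin n) ℤ} {S : Finset (Fin n)} {k : Fin n}

lemma qMut_apply (B : Matrix (Fin n) (Fin n) ℤ) (k i j : Fin n) :
    qMut B k i j = if i = k ∨ j = k then -B i j else B i j + mutCorr (B i k) (B k j) :=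
  rfl

lemma NoArrowsOn.qMut_of_mem (hS : NoArrowsOn B S) (hk : k ∈ S) : NoArrowsOn (qMut B k) S := by
  intro i hi j hj
  simp [qMut_apply, hS i hi j hj, hS i hi k hk]

lemma NoArrowsOn.qMut_apply_of_left_mem (hS : NoArrowsOn B S) (hk : k ∈ S) {i : Fin n}
    (hi : i ∈ S) (hik : i ≠ k) (j : Fin n) : qMut B k i j = B i j := by
  by_cases hjk : j = k
  · subst hjk
    simp [qMut_apply, hS i hi j hk]
  · simp [qMut_apply, hik, hjk, hS i hi k hk]

lemma NoArrowsOn.qMut_apply_of_right_mem (hS : NoArrowsOn B S) (hk : k ∈ S) {j : Fin n}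
    (hj : j ∈ S) (hjk : j ≠ k) (i : Fin n) : qMut B k i j = B i j := by
  by_cases hik : i = k
  · subst hik
    simp [qMut_apply, hS i hk j hj]
  · simp [qMut_apply, hik, hjk, hS k hk j hj]

lemma groupMut_qMut (hS : NoArrowsOn B (insert k S)) (hkS : k ∉ S) :
    groupMut (qMut B k) S = groupMut B (insert k S) := by
  have hk : k ∈ insert k S := Finset.mem_insert_self k S
  have hne : ∀ x ∈ S, x ≠ k := fun x hx hxk => hkS (hxk ▸ hx)
  ext i j
  by_cases hij : i ∈ S ∨ j ∈ S
  · have hentry : qMut B k i j = B i j := hij.elim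
      (fun hi => hS.qMut_apply_of_left_mem hk (Finset.mem_insert_of_mem hi) (hne i hi) j)
      (fun hj => hS.qMut_apply_of_right_mem hk (Finset.mem_insert_of_mem hj) (hne j hj) i)
    rw [groupMut, groupMut, if_pos hij, if_pos (hij.imp Finset.mem_insert_of_mem
      Finset.mem_insert_of_mem), hentry]
  rw [groupMut, groupMut, if_neg hij]
  obtain ⟨hiS, hjS⟩ := not_or.mp hij
  have hS' := hS.qMut_of_mem hk
  by_cases hik : i = k
  · subst hik
    have hsum : ∀ x ∈ S, mutCorr (qMut B i i x) (qMut B i x j) = 0 := fun x hx => by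
      rw [hS' i hk x (Finset.mem_insert_of_mem hx), mutCorr_zero_left]
    rw [Finset.sum_eq_zero hsum, if_pos (Or.inl hk), qMut_apply, if_pos (Or.inl rfl), add_zero]
  by_cases hjk : j = k
  · subst hjk
    have hsum : ∀ x ∈ S, mutCorr (qMut B j i x) (qMut B j x j) = 0 := fun x hx => by
      rw [hS' x (Finset.mem_insert_of_mem hx) j hk, mutCorr_zero_right]
    rw [Finset.sum_eq_zero hsum, if_pos (Or.inr hk), qMut_apply, if_pos (Or.inr rfl), add_zero]
  have hsum : ∀ x ∈ S, mutCorr (qMut B k i x) (qMut B k x j) = mutCorr (B i x) (B x j) :=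
    fun x hx => by
      rw [hS.qMut_apply_of_right_mem hk (Finset.mem_insert_of_mem hx) (hne x hx),
        hS.qMut_apply_of_left_mem hk (Finset.mem_insert_of_mem hx) (hne x hx)]
  rw [Finset.sum_congr rfl hsum, if_neg (by simp [hik, hjk, hiS, hjS]), Finset.sum_insert hkS,
    qMut_apply, if_neg (by simp [hik, hjk])]
  ring

lemma foldl_qMut_eq_groupMut {l : List (Fin n)} (hl : l.Nodup) (hB : NoArrowsOn B l.toFinset) :
    l.foldl qMut B = groupMut B l.toFinset := by
  induction l generalizing B with
  | nil => simp
  | cons k t ih =>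
    obtain ⟨hkt, ht⟩ := List.nodup_cons.mp hl
    rw [List.toFinset_cons] at hB ⊢
    have hB' : NoArrowsOn (qMut B k) t.toFinset :=
      (hB.qMut_of_mem (Finset.mem_insert_self k _)).mono (Finset.subset_insert k _)
    rw [List.foldl_cons, ih ht hB', groupMut_qMut hB (by simpa using hkt)]

end Mutation

theorem group_mutation_automorphism_general {n : ℕ} (B : Matrix (Fin n) (Fin n) ℤ)
    (τ : Equiv.Perm (Fin n))
    (haut : ∀ i j, B (τ i) (τ j) = B i j)
    (O : Finset (Fin n))
    (hOclosed : ∀ i ∈ O, τ i ∈ O)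
    (hnoarrow : ∀ i ∈ O, ∀ j ∈ O, B i j = 0)
    (l : List (Fin n)) (hl : l.Nodup) (hlO : l.toFinset = O) :
    ∀ i j, (l.foldl qMut B) (τ i) (τ j) = (l.foldl qMut B) i j := by
  subst hlO
  have hmap : l.toFinset.map τ.toEmbedding = l.toFinset :=
    Finset.map_eq_of_subset fun x hx => by
      obtain ⟨y, hy, rfl⟩ := Finset.mem_map.mp hx
      exact hOclosed y hy
  rw [foldl_qMut_eq_groupMut hl hnoarrow]
  exact groupMut_apply_perm haut hmap

/-- If `τ` is an automorphism of the quiver `B` and `O` is a `τ`-orbit with no arrows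
between its nodes, then the group mutation at `O` (the composition of the mutations at
the nodes of `O`, in any order) yields a quiver on which `τ` again acts as an
automorphism. -/
theorem group_mutation_automorphism {n : ℕ} (B : Matrix (Fin n) (Fin n) ℤ)
    (τ : Equiv.Perm (Fin n))
    (hskew : ∀ i j, B j i = -B i j)
    (haut : ∀ i j, B (τ i) (τ j) = B i j)
    (O : Finset (Fin n))
    (hOclosed : ∀ i ∈ O, τ i ∈ O)
    (hOorbit : ∀ i ∈ O, ∀ j ∈ O, ∃ m : ℕ, (τ ^ m) i = j)
    (hnoarrow : ∀ i ∈ O, ∀ j ∈ O, B i j = 0)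
    (l : List (Fin n)) (hl : l.Nodup) (hlO : l.toFinset = O) :
    ∀ i j, (l.foldl qMut B) (τ i) (τ j) = (l.foldl qMut B) i j :=
  group_mutation_automorphism_general B τ haut O hOclosed hnoarrow l hl hlO
end

section
/- Let B be a skew-symmetric matrix on 2n nodes invariant under the fixed-point-free involution τ(i) = i+n (indices mod 2n), with B[i][τ(i)] = 0 for all i. Then for any i, the composite μ_i ∘ μ_{τ(i)} equals μ_{τ(i)} ∘ μ_i, and the resulting matrix is again τ-invariant with B'[j][τ(j)] = 0 for all j. -/
lemma half2 (c : ℤ) : (2*c)/2 = c := Int.mul_ediv_cancel_left c two_ne_zero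

lemma keyZero (x y : ℤ) :
    (|x| * (-y) + x * |(-y)|)/2 + (|y| * (-x) + y * |(-x)|)/2 = 0 := by
  rw [abs_neg, abs_neg]
  rcases abs_cases x with ⟨hx, _⟩ | ⟨hx, _⟩ <;> rcases abs_cases y with ⟨hy, _⟩ | ⟨hy, _⟩ <;>
    rw [hx, hy]
  · rw [show x*(-y)+x*y = 2*0 by ring, show y*(-x)+y*x = 2*0 by ring, half2]; norm_num
  · rw [show x*(-y)+x*(-y) = 2*(-(x*y)) by ring, show (-y)*(-x)+y*x = 2*(x*y) by ring,
      half2, half2]; ring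
  · rw [show (-x)*(-y)+x*y = 2*(x*y) by ring, show y*(-x)+y*(-x) = 2*(-(x*y)) by ring,
      half2, half2]; ring
  · rw [show (-x)*(-y)+x*(-y) = 2*0 by ring, show (-y)*(-x)+y*(-x) = 2*0 by ring, half2]
    norm_num

lemma qMut_qMut {m : ℕ} (B : Matrix (Fin m) (Fin m) ℤ) (a b : Fin m) (hab : a ≠ b)
    (h1 : B a b = 0) (h2 : B b a = 0) :
    qMut (qMut B a) b = fun j k =>
      if j = a ∨ k = a ∨ j = b ∨ k = b then -B j k
      else B j k + (|B j a| * B a k + B j a * |B a k|)/2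
        + (|B j b| * B b k + B j b * |B b k|)/2 := by
  have hba : b ≠ a := fun h => hab h.symm
  funext j k
  simp only [qMut]
  by_cases hja : j = a <;> by_cases hka : k = a <;> by_cases hjb : j = b <;>
    by_cases hkb : k = b <;>
    simp_all

lemma qMut_qMut_apply {m : ℕ} (B : Matrix (Fin m) (Fin m) ℤ) (a b : Fin m) (hab : a ≠ b)
    (h1 : B a b = 0) (h2 : B b a = 0) (j k : Fin m) :
    qMut (qMut B a) b j k =
      if j = a ∨ k = a ∨ j = b ∨ k = b then -B j k
      else B j k + (|B j a| * B a k + B j a * |B a k|)/2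
        + (|B j b| * B b k + B j b * |B b k|)/2 :=
  congrFun (congrFun (qMut_qMut B a b hab h1 h2) j) k

/-- For a skew-symmetric matrix on `2n` nodes invariant under the fixed-point-free
involution `τ(i) = i + n` with `B[i][τ(i)] = 0`, the mutations at `i` and `τ(i)`
commute, and the resulting matrix is again `τ`-invariant with `B'[j][τ(j)] = 0`. -/
theorem orbit_mutation_invariance (n : ℕ) (hn : 0 < n)
    (B : Matrix (Fin (2 * n)) (Fin (2 * n)) ℤ) :
    let τ : Fin (2 * n) → Fin (2 * n) := fun i => i + ⟨n, by omega⟩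
    (∀ i j, B j i = -B i j) →
    (∀ i j, B (τ i) (τ j) = B i j) →
    (∀ i, B i (τ i) = 0) →
    ∀ i : Fin (2 * n),
      qMut (qMut B i) (τ i) = qMut (qMut B (τ i)) i ∧
      (∀ j k, (qMut (qMut B i) (τ i)) (τ j) (τ k) = (qMut (qMut B i) (τ i)) j k) ∧
      (∀ j, (qMut (qMut B i) (τ i)) j (τ j) = 0) := by
  intro τ hskew hinv hzero i
  haveI : NeZero (2 * n) := ⟨by omega⟩
  have hc0 : (⟨n, by omega⟩ + ⟨n, by omega⟩ : Fin (2*n)) = 0 := by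
    apply Fin.ext
    simp [Fin.add_def, Fin.ext_iff]
    rw [show n + n = 2*n by ring, Nat.mod_self]
  have hττ : ∀ j, τ (τ j) = j := by
    intro j
    show j + _ + _ = j
    rw [add_assoc, hc0, add_zero]
  have hne : ∀ j, j ≠ τ j := by
    intro j h
    have h2 : j + 0 = j + ⟨n, by omega⟩ := by rw [add_zero]; exact h
    have h3 : (0 : Fin (2*n)) = ⟨n, by omega⟩ := add_left_cancel h2
    have := Fin.ext_iff.mp h3
    simp at this
    omega
  have hτeq : ∀ x y, τ x = y ↔ x = τ y := by
    intro x y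
    constructor
    · intro h; rw [← h, hττ]
    · intro h; rw [h, hττ]
  have hzero' : ∀ j, B (τ j) j = 0 := fun j => by rw [hskew, hzero, neg_zero]
  have h1 : B i (τ i) = 0 := hzero i
  have h2 : B (τ i) i = 0 := hzero' i
  have hab : i ≠ τ i := hne i
  have hba : τ i ≠ i := fun h => hab h.symm
  refine ⟨?_, ?_, ?_⟩
  · rw [qMut_qMut B i (τ i) hab h1 h2, qMut_qMut B (τ i) i hba h2 h1]
    funext j k
    split_ifs with hc hc' hc' <;> first | rfl | tauto | ring
  · intro j k
    rw [qMut_qMut_apply B i (τ i) hab h1 h2, qMut_qMut_apply B i (τ i) hab h1 h2]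
    have e1 : B (τ j) i = B j (τ i) := by
      conv_lhs => rw [show i = τ (τ i) from (hττ i).symm, hinv]
    have e2 : B i (τ k) = B (τ i) k := by
      conv_lhs => rw [show i = τ (τ i) from (hττ i).symm, hinv]
    have e3 : B (τ j) (τ i) = B j i := hinv j i
    have e4 : B (τ i) (τ k) = B i k := hinv i k
    have hcond : (τ j = i ∨ τ k = i ∨ τ j = τ i ∨ τ k = τ i) ↔
        (j = i ∨ k = i ∨ j = τ i ∨ k = τ i) := by
      simp only [hτeq, hττ]
      tauto
    by_cases h : j = i ∨ k = i ∨ j = τ i ∨ k = τ i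
    · rw [if_pos (hcond.mpr h), if_pos h, hinv]
    · rw [if_neg (fun hh => h (hcond.mp hh)), if_neg h, hinv, e1, e2, e3, e4]
      ring
  · intro j
    rw [qMut_qMut_apply B i (τ i) hab h1 h2]
    by_cases h : j = i ∨ τ j = i ∨ j = τ i ∨ τ j = τ i
    · rw [if_pos h, hzero, neg_zero]
    · rw [if_neg h, hzero]
      have e1 : B i (τ j) = -B j (τ i) := by
        conv_lhs => rw [show i = τ (τ i) from (hττ i).symm, hinv]
        rw [hskew]
      have e2 : B (τ i) (τ j) = -B j i := by rw [hinv, hskew]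
      rw [e1, e2]
      linarith [keyZero (B j i) (B j (τ i))]
end

section
/- If a quiver Q on 2n nodes admits a fixed-point-free involutive automorphism τ, then for any finite sequence of group mutations at τ-orbits, the resulting quiver Q' also admits a fixed-point-free involutive automorphism (the same permutation τ), and the map sending each folded seed to its τ-quotient data gives a well-defined sequence of exchange relations in n folded variables. -/
open scoped BigOperators

/-- Mutation of the cluster variables at node `k`. -/
def varMut {n : ℕ} {F : Type*} [Field F] (B : Matrix (Fin n) (Fin n) ℤ)
    (z : Fin n → F) (k : Fin n) : Fin n → F :=
  Function.update z k
    (((∏ i, z i ^ (B i k).toNat) + (∏ i, z i ^ (B k i).toNat)) / z k)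

/-- Seed mutation at node `k`. -/
def seedMut {n : ℕ} {F : Type*} [Field F]
    (s : Matrix (Fin n) (Fin n) ℤ × (Fin n → F)) (k : Fin n) :
    Matrix (Fin n) (Fin n) ℤ × (Fin n → F) :=
  (qMut s.1 k, varMut s.1 s.2 k)

/-- Group mutation of a seed at the orbit `{k, τ k}` of a fixed-point-free
involution `τ`. -/
def orbitSeedMut {n : ℕ} {F : Type*} [Field F] (τ : Equiv.Perm (Fin n))
    (s : Matrix (Fin n) (Fin n) ℤ × (Fin n → F)) (k : Fin n) :
    Matrix (Fin n) (Fin n) ℤ × (Fin n → F) :=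
  seedMut (seedMut s k) (τ k)

lemma qMut_skew {n : ℕ} (B : Matrix (Fin n) (Fin n) ℤ)
    (hskew : ∀ i j, B j i = -B i j) (k : Fin n) :
    ∀ i j, qMut B k j i = -qMut B k i j := by
  intro i j
  unfold qMut
  by_cases h : i = k ∨ j = k
  · have h' : j = k ∨ i = k := h.symm
    simp [h, h', hskew i j]
  · have h' : ¬ (j = k ∨ i = k) := fun hc => h hc.symm
    rw [if_neg h', if_neg h]
    have h2 : (2:ℤ) ∣ (|B i k| * B k j + B i k * |B k j|) := by
      rcases abs_choice (B i k) with hx | hx <;> rcases abs_choice (B k j) with hy | hy <;>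
        rw [hx, hy]
      · exact ⟨B i k * B k j, by ring⟩
      · exact ⟨0, by ring⟩
      · exact ⟨0, by ring⟩
      · exact ⟨-(B i k * B k j), by ring⟩
    have e1 : |B j k| * B k i + B j k * |B k i|
        = -(|B i k| * B k j + B i k * |B k j|) := by
      rw [hskew k j, hskew i k, abs_neg, abs_neg]; ring
    rw [e1, hskew i j]
    obtain ⟨c, hc⟩ := h2
    rw [hc]
    omega

lemma qMut_conj {n : ℕ} (τ : Equiv.Perm (Fin n)) (M : Matrix (Fin n) (Fin n) ℤ)
    (k i j : Fin n) :
    qMut (fun p q => M (τ p) (τ q)) k i j = qMut M (τ k) (τ i) (τ j) := by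
  unfold qMut
  simp [Equiv.apply_eq_iff_eq]

lemma qMut_comm {n : ℕ} (B : Matrix (Fin n) (Fin n) ℤ) (a b : Fin n)
    (hne : a ≠ b) (hab : B a b = 0) (hba : B b a = 0) :
    qMut (qMut B a) b = qMut (qMut B b) a := by
  have hne' : b ≠ a := hne.symm
  funext i j
  by_cases hia : i = a <;> by_cases hja : j = a <;>
    by_cases hib : i = b <;> by_cases hjb : j = b <;>
      simp_all [qMut] <;> ring

lemma prod_shift {m : ℕ} {F : Type*} [CommMonoid F] (τ : Equiv.Perm (Fin m)) (z : Fin m → F)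
    (hz : ∀ i, z (τ i) = z i) (e : Fin m → ℕ) :
    ∏ i, z i ^ e (τ i) = ∏ i, z i ^ e i := by
  calc ∏ i, z i ^ e (τ i) = ∏ i, z (τ i) ^ e (τ i) := by simp [hz]
    _ = ∏ i, z i ^ e i := Equiv.prod_comp τ fun i => z i ^ e i

lemma step_lemma {m : ℕ} {F : Type*} [Field F] (τ : Equiv.Perm (Fin m))
    (hord2 : ∀ i, τ (τ i) = i) (hfpf : ∀ i, τ i ≠ i)
    (s : Matrix (Fin m) (Fin m) ℤ × (Fin m → F))
    (hskew : ∀ i j, s.1 j i = -s.1 i j)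
    (haut : ∀ i j, s.1 (τ i) (τ j) = s.1 i j)
    (hz : ∀ i, s.2 (τ i) = s.2 i) (a : Fin m) :
    (∀ i j, (orbitSeedMut τ s a).1 j i = -(orbitSeedMut τ s a).1 i j) ∧
    (∀ i j, (orbitSeedMut τ s a).1 (τ i) (τ j) = (orbitSeedMut τ s a).1 i j) ∧
    (∀ i, (orbitSeedMut τ s a).2 (τ i) = (orbitSeedMut τ s a).2 i) := by
  obtain ⟨B, z⟩ := s
  simp only at hskew haut hz
  have hne : a ≠ τ a := (hfpf a).symm
  have hne' : τ a ≠ a := hfpf a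
  have htb : τ (τ a) = a := hord2 a
  have hab : B a (τ a) = 0 := by
    have h1 : B (τ a) (τ (τ a)) = B a (τ a) := haut a (τ a)
    rw [htb] at h1
    have h2 : B (τ a) a = -B a (τ a) := hskew a (τ a)
    omega
  have hba : B (τ a) a = 0 := by rw [hskew a (τ a), hab]; ring
  have hBtau : (fun p q => B (τ p) (τ q)) = B := by funext p q; exact haut p q
  have hs1 : (orbitSeedMut τ (B, z) a).1 = qMut (qMut B a) (τ a) := rfl
  -- skew-symmetry of the final matrix
  have hskew2 : ∀ i j, qMut (qMut B a) (τ a) j i = -qMut (qMut B a) (τ a) i j :=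
    qMut_skew _ (qMut_skew B hskew a) (τ a)
  -- equivariance of the final matrix
  have hC : (fun p q => qMut B a (τ p) (τ q)) = qMut B (τ a) := by
    funext p q
    have h := qMut_conj τ B (τ a) p q
    rw [htb, hBtau] at h
    exact h.symm
  have hequi : ∀ i j, qMut (qMut B a) (τ a) (τ i) (τ j) = qMut (qMut B a) (τ a) i j := by
    intro i j
    have h1 : qMut (fun p q => qMut B a (τ p) (τ q)) a i j
        = qMut (qMut B a) (τ a) (τ i) (τ j) := qMut_conj τ (qMut B a) a i j
    rw [← h1, hC, qMut_comm B (τ a) a hne' hba hab]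
  -- the variables
  have hcol : ∀ i, qMut B a i (τ a) = B i (τ a) := by
    intro i
    unfold qMut
    by_cases h : i = a <;> simp [h, hne', hab]
  have hrow : ∀ j, qMut B a (τ a) j = B (τ a) j := by
    intro j
    unfold qMut
    by_cases h : j = a <;> simp [h, hne', hba]
  have hs2 : (orbitSeedMut τ (B, z) a).2
      = varMut (qMut B a) (varMut B z a) (τ a) := rfl
  set X : F := ((∏ i, z i ^ (B i a).toNat) + (∏ i, z i ^ (B a i).toNat)) / z a with hX
  have hz1 : varMut B z a = Function.update z a X := rfl
  have hupd : ∀ (c : Fin m → ℤ), c a = 0 →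
      ∏ i, (Function.update z a X) i ^ (c i).toNat = ∏ i, z i ^ (c i).toNat := by
    intro c hc
    refine Finset.prod_congr rfl fun i _ => ?_
    by_cases h : i = a
    · subst h; simp [hc]
    · rw [Function.update_of_ne h]
  have hP : ∏ i, (Function.update z a X) i ^ (qMut B a i (τ a)).toNat
      = ∏ i, z i ^ (B i a).toNat := by
    calc ∏ i, (Function.update z a X) i ^ (qMut B a i (τ a)).toNat
        = ∏ i, (Function.update z a X) i ^ (B i (τ a)).toNat := by
          refine Finset.prod_congr rfl fun i _ => by rw [hcol]
      _ = ∏ i, z i ^ (B i (τ a)).toNat := hupd _ hab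
      _ = ∏ i, z i ^ (B (τ i) a).toNat := by
          refine Finset.prod_congr rfl fun i _ => ?_
          have h := haut i (τ a)
          rw [htb] at h
          rw [h]
      _ = ∏ i, z i ^ (B i a).toNat := prod_shift τ z hz (fun j => (B j a).toNat)
  have hQ : ∏ i, (Function.update z a X) i ^ (qMut B a (τ a) i).toNat
      = ∏ i, z i ^ (B a i).toNat := by
    calc ∏ i, (Function.update z a X) i ^ (qMut B a (τ a) i).toNat
        = ∏ i, (Function.update z a X) i ^ (B (τ a) i).toNat := by
          refine Finset.prod_congr rfl fun i _ => by rw [hrow]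
      _ = ∏ i, z i ^ (B (τ a) i).toNat := hupd _ hba
      _ = ∏ i, z i ^ (B a (τ i)).toNat := by
          refine Finset.prod_congr rfl fun i _ => ?_
          have h := haut (τ a) i
          rw [htb] at h
          rw [← h]
      _ = ∏ i, z i ^ (B a i).toNat := prod_shift τ z hz (fun j => (B a j).toNat)
  have hzb : Function.update z a X (τ a) = z a := by
    rw [Function.update_of_ne hne', hz a]
  have hY : varMut (qMut B a) (Function.update z a X) (τ a)
      = Function.update (Function.update z a X) (τ a) X := by
    unfold varMut
    rw [hP, hQ, hzb, ← hX]
  have hvar : ∀ i, (orbitSeedMut τ (B, z) a).2 (τ i) = (orbitSeedMut τ (B, z) a).2 i := by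
    intro i
    rw [hs2, hz1, hY]
    by_cases hia : i = a
    · subst hia
      rw [Function.update_self, Function.update_of_ne hne, Function.update_self]
    · by_cases hib : i = τ a
      · subst hib
        rw [htb, Function.update_of_ne (fun h => hia (by rw [← h])), Function.update_self,
          Function.update_self]
      · have h1 : τ i ≠ τ a := fun h => hia (τ.injective h)
        have h2 : τ i ≠ a := fun h => hib (by rw [← hord2 i, h])
        rw [Function.update_of_ne h1, Function.update_of_ne h2,
          Function.update_of_ne hib, Function.update_of_ne hia, hz i]
  exact ⟨fun i j => hskew2 i j, fun i j => hequi i j, hvar⟩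

theorem fold_invariant {m : ℕ} {F : Type*} [Field F] (τ : Equiv.Perm (Fin m))
    (hord2 : ∀ i, τ (τ i) = i) (hfpf : ∀ i, τ i ≠ i)
    (ks : List (Fin m)) :
    ∀ (s : Matrix (Fin m) (Fin m) ℤ × (Fin m → F)),
    (∀ i j, s.1 j i = -s.1 i j) →
    (∀ i j, s.1 (τ i) (τ j) = s.1 i j) →
    (∀ i, s.2 (τ i) = s.2 i) →
    (∀ i j, (ks.foldl (orbitSeedMut τ) s).1 j i = -(ks.foldl (orbitSeedMut τ) s).1 i j) ∧
    (∀ i j, (ks.foldl (orbitSeedMut τ) s).1 (τ i) (τ j) = (ks.foldl (orbitSeedMut τ) s).1 i j) ∧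
    (∀ i, (ks.foldl (orbitSeedMut τ) s).2 (τ i) = (ks.foldl (orbitSeedMut τ) s).2 i) := by
  induction ks with
  | nil => exact fun s h1 h2 h3 => ⟨h1, h2, h3⟩
  | cons k ks ih =>
    intro s h1 h2 h3
    rw [List.foldl_cons]
    obtain ⟨g1, g2, g3⟩ := step_lemma τ hord2 hfpf s h1 h2 h3 k
    exact ih (orbitSeedMut τ s k) g1 g2 g3

/-- If a quiver on `2n` nodes admits a fixed-point-free involutive automorphism `τ`,
then after any finite sequence of group mutations at `τ`-orbits the resulting quiver
still admits `τ` as a (fixed-point-free, involutive) automorphism, and the folded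
variables remain well defined: both nodes of every orbit carry equal cluster
variables throughout. -/
theorem fpf_involution_folding {m : ℕ} {F : Type*} [Field F]
    (B : Matrix (Fin m) (Fin m) ℤ) (τ : Equiv.Perm (Fin m))
    (hskew : ∀ i j, B j i = -B i j)
    (haut : ∀ i j, B (τ i) (τ j) = B i j)
    (hord2 : ∀ i, τ (τ i) = i)
    (hfpf : ∀ i, τ i ≠ i)
    (z : Fin m → F)
    (hz : ∀ i, z (τ i) = z i)
    (ks : List (Fin m)) :
    (∀ i j, (ks.foldl (orbitSeedMut τ) (B, z)).1 (τ i) (τ j)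
        = (ks.foldl (orbitSeedMut τ) (B, z)).1 i j) ∧
    (∀ i, (ks.foldl (orbitSeedMut τ) (B, z)).2 (τ i)
        = (ks.foldl (orbitSeedMut τ) (B, z)).2 i) := by
  obtain ⟨-, h2, h3⟩ := fold_invariant τ hord2 hfpf ks (B, z) hskew haut hz
  exact ⟨h2, h3⟩
end
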